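/- arXiv:math/0302293 — 2 statements merged into one kernel-verified Lean document; each statement's English description precedes it below -/
import Mathlib

section
/- For all integers k ≥ 1 and n ≥ 2, the cut-then-k-riffle-shuffle measure is a probability measure: Σ_{π ∈ S_n} binom(n+k−cd(π)−1, n−1)/(n·k^{n−1}) = 1. -/
/-- Number of descents of a permutation of `{1,...,n}` (here `Fin n`, 0-indexed):
the number of positions `i` with `1 ≤ i ≤ n-1` and `π(i) > π(i+1)`. -/
def numDescents (n : ℕ) (π : Equiv.Perm (Fin n)) : ℕ :=
  ((Finset.range (n - 1)).filter (fun i =>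
    ∃ h : i + 1 < n, π ⟨i + 1, h⟩ < π ⟨i, Nat.lt_of_succ_lt h⟩)).card

/-- `π` has a cyclic descent at `n` if `π(n) > π(1)`. -/
def hasCyclicDescentAtLast (n : ℕ) (π : Equiv.Perm (Fin n)) : Prop :=
  ∃ h : 0 < n, π ⟨0, h⟩ < π ⟨n - 1, Nat.sub_lt h Nat.one_pos⟩

instance (n : ℕ) (π : Equiv.Perm (Fin n)) : Decidable (hasCyclicDescentAtLast n π) :=
  exists_prop_decidable _

/-- Number of cyclic descents: `d(π)+1` if `π` has a cyclic descent at `n`, else `d(π)`. -/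
def numCyclicDescents (n : ℕ) (π : Equiv.Perm (Fin n)) : ℕ :=
  numDescents n π + if hasCyclicDescentAtLast n π then 1 else 0

/-- The k-riffle shuffle measure `R_{k,n}(π) = binom(n+k-d(π)-1, n) / k^n`. -/
noncomputable def riffle (k n : ℕ) (π : Equiv.Perm (Fin n)) : ℝ :=
  (Nat.choose (n + k - numDescents n π - 1) n : ℝ) / (k : ℝ) ^ n

/-- The cut-then-k-riffle-shuffle measure
`C_{k,n}(π) = binom(n+k-cd(π)-1, n-1) / (n·k^(n-1))`. -/
noncomputable def cutRiffle (k n : ℕ) (π : Equiv.Perm (Fin n)) : ℝ :=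
  (Nat.choose (n + k - numCyclicDescents n π - 1) (n - 1) : ℝ) / ((n : ℝ) * (k : ℝ) ^ (n - 1))

/-!
Worpitzky's identity `k ^ n = ∑_{σ ∈ S_n} C(k + n - 1 - d(σ), n)` comes from sorting: every word
`f : [n] → [k]` is stably sorted by a unique `σ`, and the words sorted by `σ` are those with
`f ∘ σ` weakly increasing and strictly increasing at the descents of `σ`. Adding to `(f ∘ σ) i`
the number of non-descents of `σ` below `i` turns these into the strictly increasing maps
`[n] → [k + n - 1 - d(σ)]`.

Cyclic descents do not change when the positions are rotated, and every `π ∈ S_{n+1}` is uniquely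
a rotation of a permutation fixing `0`; for the latter, `cd` is one more than the number of
descents of its restriction `σ ∈ S_n`. Hence `∑_{π ∈ S_{n+1}} C(n + k - cd(π), n) = (n + 1) k ^ n`.
-/

open Finset

theorem card_filter_strictMono (M N : ℕ) : #{h : Fin M → Fin N | StrictMono h} = N.choose M := by
  rw [show N.choose M = #((univ : Finset (Fin N)).powersetCard M) by simp]
  refine card_bij (fun h _ => univ.image h) ?_ ?_ ?_
  · intro h hh
    rw [mem_filter] at hh
    simp [mem_powersetCard, card_image_of_injective _ hh.2.injective]
  · intro h hh h' hh' heq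
    rw [mem_filter] at hh hh'
    refine (hh.2.range_inj hh'.2).mp ?_
    simpa [← Set.image_univ] using congrArg ((↑) : Finset (Fin N) → Set (Fin N)) heq
  · intro s hs
    have hcard := (mem_powersetCard.mp hs).2
    exact ⟨s.orderEmbOfFin hcard, by simp [(s.orderEmbOfFin hcard).strictMono],
      image_orderEmbOfFin_univ s hcard⟩

theorem StrictMono.val_add_sub_le {n N : ℕ} {h : Fin n → Fin N} (hh : StrictMono h)
    {i j : Fin n} (hij : i ≤ j) : (h i : ℕ) + (j - i) ≤ h j := by
  have hmaps : Set.MapsTo (fun x => (h x : ℕ)) (Icc i j) (Icc (h i : ℕ) (h j)) := fun x hx => by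
    simp only [coe_Icc, Set.mem_Icc] at hx ⊢
    exact ⟨hh.monotone hx.1, hh.monotone hx.2⟩
  have := card_le_card_of_injOn _ hmaps (Fin.val_injective.comp hh.injective).injOn
  simp only [Fin.card_Icc, Nat.card_Icc] at this
  omega

section WeakSteps

variable {m : ℕ} (D : Finset (Fin m))

def weakStepsBelow (t : ℕ) : ℕ := #(range t \ D.map Fin.valEmbedding)

theorem weakStepsBelow_le (t : ℕ) : weakStepsBelow D t ≤ t :=
  (card_le_card sdiff_subset).trans (card_range t).le

theorem weakStepsBelow_mono : Monotone (weakStepsBelow D) := fun _ _ hst =>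
  card_le_card (sdiff_subset_sdiff (range_subset_range.mpr hst) le_rfl)

theorem weakStepsBelow_le_add (s t : ℕ) : weakStepsBelow D t ≤ weakStepsBelow D s + (t - s) :=
  calc weakStepsBelow D t ≤ #((range s \ D.map Fin.valEmbedding) ∪ Ico s t) :=
        card_le_card fun x hx => by
          simp only [mem_sdiff, mem_range, mem_union, mem_Ico] at hx ⊢
          by_cases hxs : x < s
          exacts [Or.inl ⟨hxs, hx.2⟩, Or.inr ⟨by omega, hx.1⟩]
    _ ≤ weakStepsBelow D s + (t - s) := (card_union_le _ _).trans (by simp [weakStepsBelow])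

theorem weakStepsBelow_succ (i : Fin m) :
    weakStepsBelow D (i + 1) = weakStepsBelow D i + if i ∈ D then 0 else 1 := by
  have hmem : (i : ℕ) ∈ D.map Fin.valEmbedding ↔ i ∈ D := by simp [Fin.val_inj]
  rw [weakStepsBelow, weakStepsBelow, range_add_one]
  split_ifs with hi
  · rw [insert_sdiff_of_mem _ (hmem.mpr hi), add_zero]
  · rw [insert_sdiff_of_notMem _ (hmem.not.mpr hi), card_insert_of_notMem (by simp)]

theorem weakStepsBelow_self : weakStepsBelow D m = m - #D := by
  rw [weakStepsBelow, card_sdiff_of_subset (fun x => by simp; omega), card_range, card_map]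

theorem add_weakStepsBelow_lt_iff (i : Fin m) (a b : ℕ) :
    a + weakStepsBelow D i < b + weakStepsBelow D (i + 1) ↔
      if i ∈ D then a < b else a ≤ b := by
  rw [weakStepsBelow_succ]
  split_ifs <;> omega

end WeakSteps

theorem card_weakly_increasing_strict_at (m k : ℕ) (D : Finset (Fin m)) :
    #{g : Fin (m + 1) → Fin k | ∀ i : Fin m,
        if i ∈ D then g i.castSucc < g i.succ else g i.castSucc ≤ g i.succ}
      = (k + m - #D).choose (m + 1) := by
  have hD : #D ≤ m := (card_le_univ D).trans (Fintype.card_fin m).le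
  have hbound (i : Fin (m + 1)) : weakStepsBelow D i ≤ m - #D :=
    weakStepsBelow_self D ▸ weakStepsBelow_mono D (Nat.lt_succ_iff.mp i.isLt)
  rw [← card_filter_strictMono]
  refine card_bij (fun g _ i => ⟨g i + weakStepsBelow D i, by
    have := (g i).isLt; have := hbound i; omega⟩) ?_ ?_ ?_
  · intro g hg
    simp only [mem_filter, mem_univ, true_and, Fin.strictMono_iff_lt_succ] at hg ⊢
    exact fun i => (add_weakStepsBelow_lt_iff D i _ _).mpr (hg i)
  · intro g _ g' _ heq
    funext i
    exact Fin.ext (by simpa using congrArg (fun h => (h i : ℕ)) heq)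
  · intro h hh
    simp only [mem_filter, mem_univ, true_and] at hh
    have hlow (i : Fin (m + 1)) : weakStepsBelow D i ≤ h i := by
      have := hh.val_add_sub_le (Fin.zero_le i)
      have := weakStepsBelow_le D i
      simp only [Fin.val_zero] at *
      omega
    have hhigh (i : Fin (m + 1)) : (h i : ℕ) - weakStepsBelow D i < k := by
      have := hh.val_add_sub_le (Fin.le_last i)
      have := (h (Fin.last m)).isLt
      have := weakStepsBelow_le_add D i m
      have := weakStepsBelow_self D
      have := hlow i
      simp only [Fin.val_last] at *
      omega
    refine ⟨fun i => ⟨h i - weakStepsBelow D i, hhigh i⟩, ?_, funext fun i => Fin.ext ?_⟩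
    · simp only [mem_filter, mem_univ, true_and]
      refine fun i => (add_weakStepsBelow_lt_iff D i _ _).mp ?_
      have := hh (Fin.castSucc_lt_succ (i := i))
      have := hlow i.castSucc
      have := hlow i.succ
      simp only [Fin.lt_def, Fin.val_succ, Fin.val_castSucc] at *
      omega
    · have := hlow i
      simp only
      omega

open Equiv

theorem Tuple.sort_eq_iff_strict_at_descents {α : Type*} [LinearOrder α] {m : ℕ}
    (f : Fin (m + 1) → α) (σ : Perm (Fin (m + 1))) :
    Tuple.sort f = σ ↔ ∀ i : Fin m, if σ i.succ < σ i.castSucc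
      then f (σ i.castSucc) < f (σ i.succ) else f (σ i.castSucc) ≤ f (σ i.succ) := by
  rw [eq_comm, Tuple.eq_sort_iff', Fin.strictMono_iff_lt_succ]
  refine forall_congr' fun i => ?_
  have hne : σ i.castSucc ≠ σ i.succ := σ.injective.ne Fin.castSucc_lt_succ.ne
  change toLex (f (σ i.castSucc), σ i.castSucc) < toLex (f (σ i.succ), σ i.succ) ↔ _
  rw [Prod.Lex.toLex_lt_toLex]
  split_ifs with h
  · simp [h.not_gt]
  · simp [lt_of_le_of_ne (not_lt.mp h) hne, le_iff_lt_or_eq]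

theorem numDescents_eq_card_filter {m : ℕ} (σ : Perm (Fin (m + 1))) :
    numDescents (m + 1) σ = #{i : Fin m | σ i.succ < σ i.castSucc} := by
  rw [numDescents, card_filter, card_filter, Nat.add_sub_cancel,
    ← Fin.sum_univ_eq_sum_range]
  simp only [add_lt_add_iff_right, Fin.is_lt, exists_true_left]
  rfl

theorem sum_choose_numDescents (m k : ℕ) :
    ∑ σ : Perm (Fin (m + 1)), (k + m - numDescents (m + 1) σ).choose (m + 1) = k ^ (m + 1) := by
  classical
  calc ∑ σ : Perm (Fin (m + 1)), (k + m - numDescents (m + 1) σ).choose (m + 1)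
      = ∑ σ : Perm (Fin (m + 1)), #{f : Fin (m + 1) → Fin k | Tuple.sort f = σ} := by
        refine sum_congr rfl fun σ _ => ?_
        rw [numDescents_eq_card_filter, ← card_weakly_increasing_strict_at]
        refine (card_equiv (σ.symm.arrowCongr (Equiv.refl _)) fun f => ?_).symm
        simp [Tuple.sort_eq_iff_strict_at_descents]
    _ = #(univ : Finset (Fin (m + 1) → Fin k)) := (card_eq_sum_card_fiberwise (by simp)).symm
    _ = k ^ (m + 1) := by simp

theorem hasCyclicDescentAtLast_iff {m : ℕ} (π : Perm (Fin (m + 1))) :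
    hasCyclicDescentAtLast (m + 1) π ↔ π 0 < π (Fin.last m) := by
  simp [hasCyclicDescentAtLast, Fin.last]

theorem numCyclicDescents_eq_card_filter {m : ℕ} (π : Perm (Fin (m + 1))) :
    numCyclicDescents (m + 1) π = #{i : Fin (m + 1) | π (i + 1) < π i} := by
  simp only [numCyclicDescents, numDescents_eq_card_filter, hasCyclicDescentAtLast_iff]
  rw [card_filter, card_filter, Fin.sum_univ_castSucc, Fin.last_add_one]
  simp only [Fin.coeSucc_eq_succ]

theorem numCyclicDescents_mul_addRight {m : ℕ} (π : Perm (Fin (m + 1))) (a : Fin (m + 1)) :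
    numCyclicDescents (m + 1) (π * Equiv.addRight a) = numCyclicDescents (m + 1) π := by
  rw [numCyclicDescents_eq_card_filter, numCyclicDescents_eq_card_filter]
  exact card_equiv (Equiv.addRight a) fun i => by simp [add_right_comm]

theorem numCyclicDescents_decomposeFin_symm_zero {m : ℕ} (σ : Perm (Fin (m + 1))) :
    numCyclicDescents (m + 2) (Perm.decomposeFin.symm (0, σ)) = numDescents (m + 1) σ + 1 := by
  have hsucc (x : Fin (m + 1)) : Perm.decomposeFin.symm (0, σ) x.succ = (σ x).succ := by
    simp [Perm.decomposeFin_symm_apply_succ]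
  rw [numCyclicDescents, if_pos ((hasCyclicDescentAtLast_iff _).mpr ?_), numDescents_eq_card_filter,
    numDescents_eq_card_filter, card_filter, card_filter, Fin.sum_univ_succ]
  · simp [hsucc, Perm.decomposeFin_symm_apply_zero]
  · rw [← Fin.succ_last, hsucc, Perm.decomposeFin_symm_apply_zero]
    exact Fin.succ_pos _

theorem bijective_decomposeFin_symm_zero_mul_addRight (n : ℕ) :
    Function.Bijective fun p : Perm (Fin n) × Fin (n + 1) =>
      Perm.decomposeFin.symm (0, p.1) * Equiv.addRight p.2 := by
  refine (Fintype.bijective_iff_injective_and_card _).mpr ⟨?_, ?_⟩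
  · rintro ⟨σ, a⟩ ⟨τ, b⟩ h
    have hab : a = b := by
      have h0 := congrArg (· (-a)) h
      simp only [Perm.mul_apply, coe_addRight, neg_add_cancel,
        Perm.decomposeFin_symm_apply_zero] at h0
      rw [← Perm.decomposeFin_symm_apply_zero 0 τ] at h0
      exact neg_add_eq_zero.mp ((Perm.decomposeFin.symm (0, τ)).injective h0).symm
    subst hab
    simpa using Perm.decomposeFin.symm.injective (mul_right_cancel h)
  · simp [Fintype.card_perm, Nat.factorial_succ, mul_comm]

theorem sum_numCyclicDescents {M : Type*} [AddCommMonoid M] (m : ℕ) (F : ℕ → M) :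
    ∑ π : Perm (Fin (m + 2)), F (numCyclicDescents (m + 2) π)
      = (m + 2) • ∑ σ : Perm (Fin (m + 1)), F (numDescents (m + 1) σ + 1) := by
  rw [← Fintype.sum_bijective _ (bijective_decomposeFin_symm_zero_mul_addRight (m + 1)) _ _
    fun _ => rfl, Fintype.sum_prod_type]
  simp [numCyclicDescents_mul_addRight, numCyclicDescents_decomposeFin_symm_zero, smul_sum]

/-- the cut-then-k-riffle-shuffle measure is a probability measure. -/
theorem cutRiffle_sum_eq_one (n k : ℕ) (hn : 2 ≤ n) (hk : 1 ≤ k) :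
    ∑ π : Equiv.Perm (Fin n), cutRiffle k n π = 1 := by
  obtain ⟨m, rfl⟩ : ∃ m, n = m + 2 := ⟨n - 2, by omega⟩
  have hsum : ∑ π : Perm (Fin (m + 2)), (m + 2 + k - numCyclicDescents (m + 2) π - 1).choose (m + 1)
      = (m + 2) * k ^ (m + 1) := by
    rw [sum_numCyclicDescents m fun c => (m + 2 + k - c - 1).choose (m + 1), smul_eq_mul,
      ← sum_choose_numDescents m k]
    simp_rw [show ∀ d, m + 2 + k - (d + 1) - 1 = k + m - d by omega]
  have hk' : (0 : ℝ) < k := by exact_mod_cast hk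
  simp only [cutRiffle, ← sum_div, ← Nat.cast_sum, Nat.add_succ_sub_one, hsum]
  push_cast
  exact div_self (by positivity)
end

section
/- For all integers n ≥ 2 and k ≥ 1, Σ_{j=1}^{n−1} j·A_{n−1,j}·binom(n+k−j−1, n−1) = k^n − n·Σ_{s=1}^{k−1} s^{n−1}. -/
/-- Eulerian number `A_{m,j}`: the number of permutations of `m` symbols with `j-1` descents. -/
def eulerianA (m j : ℕ) : ℕ :=
  (Finset.univ.filter (fun π : Equiv.Perm (Fin m) => numDescents m π = j - 1)).card

open Finset Equiv

lemma Fin.natCard_orderEmbedding (m N : ℕ) : Nat.card (Fin m ↪o Fin N) = N.choose m := by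
  rw [Nat.card_congr Set.powersetCard.ofFinEmbEquiv, Set.powersetCard.card,
    Nat.card_eq_fintype_card, Fintype.card_fin]

section MonotoneStrictAt

variable {M : ℕ} {α : Type*} [Preorder α]

def MonotoneStrictAt (p : Fin M → Prop) (g : Fin (M + 1) → α) : Prop :=
  ∀ j, g j.castSucc ≤ g j.succ ∧ (p j → g j.castSucc < g j.succ)

lemma MonotoneStrictAt.monotone {p : Fin M → Prop} {g : Fin (M + 1) → α}
    (hg : MonotoneStrictAt p g) : Monotone g :=
  Fin.monotone_iff_le_succ.2 fun j => (hg j).1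

end MonotoneStrictAt

section WeakStepCount

variable {M : ℕ} (p : Fin M → Prop) [DecidablePred p]

def weakStepCount : Fin (M + 1) → ℕ :=
  Fin.partialSum fun j => if p j then 0 else 1

@[simp]
lemma weakStepCount_zero : weakStepCount p 0 = 0 :=
  Fin.partialSum_zero _

lemma weakStepCount_succ (j : Fin M) :
    weakStepCount p j.succ = weakStepCount p j.castSucc + if p j then 0 else 1 :=
  Fin.partialSum_succ _ j

lemma monotone_weakStepCount : Monotone (weakStepCount p) :=
  Fin.monotone_iff_le_succ.2 fun j => by rw [weakStepCount_succ]; exact Nat.le_add_right _ _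

lemma weakStepCount_last : weakStepCount p (Fin.last M) = #{j | ¬ p j} := by
  simp [weakStepCount, Fin.partialSum, List.take_of_length_le, List.sum_ofFn, card_filter, ite_not]

variable {p}

lemma MonotoneStrictAt.strictMono_add_weakStepCount {g : Fin (M + 1) → ℕ}
    (hg : MonotoneStrictAt p g) : StrictMono fun i => g i + weakStepCount p i :=
  Fin.strictMono_iff_lt_succ.2 fun j => by
    obtain ⟨hle, hlt⟩ := hg j
    rw [weakStepCount_succ]
    split_ifs with h
    · have := hlt h; omega
    · omega

lemma weakStepCount_le_of_strictMono {G : Fin (M + 1) → ℕ} (hG : StrictMono G)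
    (i : Fin (M + 1)) : weakStepCount p i ≤ G i := by
  induction i using Fin.induction with
  | zero => simp
  | succ j ih =>
    have := hG j.castSucc_lt_succ
    rw [weakStepCount_succ]
    split_ifs <;> omega

lemma monotoneStrictAt_sub_weakStepCount {G : Fin (M + 1) → ℕ} (hG : StrictMono G) :
    MonotoneStrictAt p fun i => G i - weakStepCount p i := fun j => by
  have hlt := hG j.castSucc_lt_succ
  have hle := weakStepCount_le_of_strictMono (p := p) hG j.castSucc
  dsimp only
  rw [weakStepCount_succ]
  split_ifs with h
  · exact ⟨by omega, fun _ => by omega⟩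
  · exact ⟨by omega, fun hp => absurd hp h⟩

lemma add_weakStepCount_lt {k : ℕ} (g : Fin (M + 1) → Fin k) (i : Fin (M + 1)) :
    g i + weakStepCount p i < k + #{j | ¬ p j} := by
  have := monotone_weakStepCount p (Fin.le_last i)
  rw [weakStepCount_last] at this
  have := (g i).2
  omega

lemma sub_weakStepCount_lt {k : ℕ} (G : Fin (M + 1) ↪o Fin (k + #{j | ¬ p j}))
    (i : Fin (M + 1)) : G i - weakStepCount p i < k := by
  have hG : StrictMono fun i => (G i : ℕ) := G.strictMono
  have hmono := (monotoneStrictAt_sub_weakStepCount (p := p) hG).monotone (Fin.le_last i)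
  have hge := weakStepCount_le_of_strictMono (p := p) hG (Fin.last M)
  have hlast := (G (Fin.last M)).2
  simp only [weakStepCount_last] at hmono hge
  omega

variable (p)

def shiftEquiv (k : ℕ) :
    {g : Fin (M + 1) → Fin k // MonotoneStrictAt p g} ≃
      (Fin (M + 1) ↪o Fin (k + #{j | ¬ p j})) where
  toFun g := OrderEmbedding.ofStrictMono (fun i => ⟨g.1 i + weakStepCount p i,
      add_weakStepCount_lt g.1 i⟩)
    (MonotoneStrictAt.strictMono_add_weakStepCount (g := fun i => (g.1 i : ℕ)) g.2)
  invFun G := ⟨fun i => ⟨G i - weakStepCount p i, sub_weakStepCount_lt G i⟩,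
    monotoneStrictAt_sub_weakStepCount G.strictMono⟩
  left_inv g := by ext i; exact Nat.add_sub_cancel ..
  right_inv G := by
    ext i
    exact Nat.sub_add_cancel (weakStepCount_le_of_strictMono (G := fun i => (G i : ℕ))
      G.strictMono i)

lemma natCard_monotoneStrictAt (k : ℕ) :
    Nat.card {g : Fin (M + 1) → Fin k // MonotoneStrictAt p g}
      = (k + #{j | ¬ p j}).choose (M + 1) := by
  rw [Nat.card_congr (shiftEquiv p k), Fin.natCard_orderEmbedding]

end WeakStepCount

section Descents

variable {M : ℕ}

def IsDescent (π : Perm (Fin (M + 1))) (j : Fin M) : Prop :=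
  π j.succ < π j.castSucc

instance (π : Perm (Fin (M + 1))) : DecidablePred (IsDescent π) :=
  fun _ => inferInstanceAs (Decidable (_ < _))

lemma numDescents_succ_eq_card (π : Perm (Fin (M + 1))) :
    numDescents (M + 1) π = #{j | IsDescent π j} := by
  rw [numDescents, card_filter, card_filter, Nat.add_sub_cancel, sum_range]
  exact sum_congr rfl fun j _ =>
    if_congr ⟨fun ⟨_, h⟩ => h, fun h => ⟨by omega, h⟩⟩ rfl rfl

lemma card_not_isDescent (π : Perm (Fin (M + 1))) :
    #{j | ¬ IsDescent π j} = M - numDescents (M + 1) π := by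
  rw [numDescents_succ_eq_card, filter_not, card_sdiff_of_subset (filter_subset _ _), card_univ,
    Fintype.card_fin]

lemma numDescents_le (π : Perm (Fin (M + 1))) : numDescents (M + 1) π ≤ M := by
  rw [numDescents_succ_eq_card]
  exact (card_filter_le _ _).trans (card_fin M).le

lemma Tuple.sort_eq_iff_monotoneStrictAt {α : Type*} [LinearOrder α] (w : Fin (M + 1) → α)
    (π : Perm (Fin (M + 1))) :
    Tuple.sort w = π ↔ MonotoneStrictAt (IsDescent π) (w ∘ π) := by
  rw [eq_comm, Tuple.eq_sort_iff', Fin.strictMono_iff_lt_succ]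
  refine forall_congr' fun j => ?_
  have hne : π j.castSucc ≠ π j.succ := π.injective.ne Fin.castSucc_lt_succ.ne
  rw [← Subtype.coe_lt_coe, Prod.Lex.lt_iff']
  simp only [Equiv.trans_apply, Tuple.graphEquiv₁, Equiv.coe_fn_mk, IsDescent,
    Function.comp_apply]
  constructor
  · rintro ⟨hle, hlt⟩
    exact ⟨hle, fun hd => lt_of_le_of_ne hle fun h => (hlt h).not_gt hd⟩
  · rintro ⟨hle, hlt⟩
    exact ⟨hle, fun h => hne.lt_or_gt.resolve_right fun hd => (hlt hd).ne h⟩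

def sortFiberEquiv {α : Type*} [LinearOrder α] (π : Perm (Fin (M + 1))) :
    {w : Fin (M + 1) → α // Tuple.sort w = π} ≃
      {g : Fin (M + 1) → α // MonotoneStrictAt (IsDescent π) g} :=
  (π.arrowCongr (Equiv.refl α)).symm.subtypeEquiv fun w => Tuple.sort_eq_iff_monotoneStrictAt w π

lemma natCard_sort_eq_choose (k : ℕ) (π : Perm (Fin (M + 1))) :
    Nat.card {w : Fin (M + 1) → Fin k // Tuple.sort w = π}
      = (k + M - numDescents (M + 1) π).choose (M + 1) := by
  rw [Nat.card_congr (sortFiberEquiv π), natCard_monotoneStrictAt, card_not_isDescent,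
    ← Nat.add_sub_assoc (numDescents_le π)]

end Descents

theorem sum_choose_numDescents_eq_pow (M k : ℕ) :
    ∑ π : Perm (Fin (M + 1)), (k + M - numDescents (M + 1) π).choose (M + 1) = k ^ (M + 1) := by
  simp_rw [← natCard_sort_eq_choose, ← Nat.card_sigma,
    Nat.card_congr (Equiv.sigmaFiberEquiv Tuple.sort), Nat.card_fun, Nat.card_eq_fintype_card,
    Fintype.card_fin]

theorem sum_choose_succ_numDescents_eq_sum_pow (M k : ℕ) :
    ∑ π : Perm (Fin (M + 1)), (k + M - numDescents (M + 1) π).choose (M + 2)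
      = ∑ s ∈ range k, s ^ (M + 1) := by
  induction k with
  | zero =>
    rw [sum_range_zero]
    exact sum_eq_zero fun π _ => Nat.choose_eq_zero_of_lt (by omega)
  | succ k ih =>
    have hpascal (π : Perm (Fin (M + 1))) :
        (k + 1 + M - numDescents (M + 1) π).choose (M + 2)
          = (k + M - numDescents (M + 1) π).choose (M + 2)
            + (k + M - numDescents (M + 1) π).choose (M + 1) := by
      rw [show k + 1 + M - numDescents (M + 1) π = k + M - numDescents (M + 1) π + 1 by
        have := numDescents_le π; omega, Nat.choose_succ_succ', add_comm]
    rw [sum_congr rfl fun π _ => hpascal π, sum_add_distrib, ih, sum_choose_numDescents_eq_pow,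
      sum_range_succ]

lemma succ_mul_choose_add_choose {d M : ℕ} (hd : d ≤ M) (k : ℕ) :
    (d + 1) * (k + M - d).choose (M + 1) + (M + 2) * (k + M - d).choose (M + 2)
      = k * (k + M - d).choose (M + 1) := by
  rcases lt_or_ge (k + M - d) (M + 1) with h | h
  · simp [Nat.choose_eq_zero_of_lt h, Nat.choose_eq_zero_of_lt (h.trans (M + 1).lt_succ_self)]
  · rw [mul_comm (M + 2), Nat.choose_succ_right_eq, mul_comm _ (_ - _), ← add_mul]
    congr 1
    omega

theorem sum_succ_numDescents_mul_choose_add (M k : ℕ) :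
    ∑ π : Perm (Fin (M + 1)),
        (numDescents (M + 1) π + 1) * (k + M - numDescents (M + 1) π).choose (M + 1)
      + (M + 2) * ∑ s ∈ range k, s ^ (M + 1) = k ^ (M + 2) := by
  rw [← sum_choose_succ_numDescents_eq_sum_pow, mul_sum, ← sum_add_distrib, pow_succ',
    ← sum_choose_numDescents_eq_pow, mul_sum]
  exact sum_congr rfl fun π _ => succ_mul_choose_add_choose (numDescents_le π) k

lemma sum_Icc_eulerianA_smul {R : Type*} [AddCommMonoid R] (M : ℕ) (f : ℕ → R) :
    ∑ j ∈ Icc 1 (M + 1), eulerianA (M + 1) j • f j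
      = ∑ π : Perm (Fin (M + 1)), f (numDescents (M + 1) π + 1) := by
  rw [← sum_fiberwise_of_maps_to (g := fun π => numDescents (M + 1) π + 1) (t := Icc 1 (M + 1))
    fun π _ => mem_Icc.2 ⟨Nat.le_add_left 1 _, Nat.succ_le_succ (numDescents_le π)⟩]
  refine sum_congr rfl fun j hj => ?_
  rw [sum_congr rfl fun π hπ => congrArg f (mem_filter.1 hπ).2, sum_const, eulerianA]
  congr 2
  ext π
  simp only [mem_filter, mem_univ, true_and]
  have := (mem_Icc.1 hj).1
  omega

theorem sum_j_eulerian_choose_general (n k : ℕ) (hn : 2 ≤ n) :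
    (∑ j ∈ Finset.Icc 1 (n - 1),
        (j : ℝ) * (eulerianA (n - 1) j : ℝ) * (Nat.choose (n + k - j - 1) (n - 1) : ℝ))
      = (k : ℝ) ^ n - (n : ℝ) * ∑ s ∈ Finset.Icc 1 (k - 1), (s : ℝ) ^ (n - 1) := by
  obtain ⟨M, rfl⟩ : ∃ M, n = M + 2 := ⟨n - 2, by omega⟩
  have hpow : ∑ s ∈ Icc 1 (k - 1), s ^ (M + 1) = ∑ s ∈ range k, s ^ (M + 1) := by
    rw [← sum_erase (range k) (zero_pow M.succ_ne_zero)]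
    congr 1
    ext s
    simp only [mem_Icc, mem_erase, mem_range]
    omega
  have hlhs : ∑ j ∈ Icc 1 (M + 1), j * eulerianA (M + 1) j * (M + 2 + k - j - 1).choose (M + 1)
      = ∑ π : Perm (Fin (M + 1)),
          (numDescents (M + 1) π + 1) * (k + M - numDescents (M + 1) π).choose (M + 1) := by
    calc _ = ∑ j ∈ Icc 1 (M + 1),
            eulerianA (M + 1) j • (j * (M + 2 + k - j - 1).choose (M + 1)) :=
          sum_congr rfl fun j _ => by rw [smul_eq_mul]; ring
      _ = _ := sum_Icc_eulerianA_smul M _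
      _ = _ := sum_congr rfl fun π _ => by
          rw [show M + 2 + k - (numDescents (M + 1) π + 1) - 1 = k + M - numDescents (M + 1) π by
            omega]
  have key := sum_succ_numDescents_mul_choose_add M k
  rw [← hlhs, ← hpow] at key
  rw [eq_sub_iff_add_eq]
  exact_mod_cast key

/-- `Σ_{j=1}^{n-1} j·A_{n-1,j}·binom(n+k-j-1, n-1) = k^n - n·Σ_{s=1}^{k-1} s^{n-1}`. -/
theorem sum_j_eulerian_choose (n k : ℕ) (hn : 2 ≤ n) (hk : 1 ≤ k) :
    (∑ j ∈ Finset.Icc 1 (n - 1),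
        (j : ℝ) * (eulerianA (n - 1) j : ℝ) * (Nat.choose (n + k - j - 1) (n - 1) : ℝ))
      = (k : ℝ) ^ n - (n : ℝ) * ∑ s ∈ Finset.Icc 1 (k - 1), (s : ℝ) ^ (n - 1) :=
  sum_j_eulerian_choose_general n k hn
end
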